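/- arXiv:2305.08007 — 6 statements merged into one kernel-verified Lean document; each statement's English description precedes it below -/
import Mathlib

section
/- Let G be a group and let H₁ ≠ H₂ be two subgroups of G. Then the HNN-extensions E(G,H₁) and E(G,H₂) (with stable letters t₁, t₂ respectively) are not isomorphic as marked groups: there is no isomorphism E(G,H₁) → E(G,H₂) sending each g ∈ G to itself and t₁ to t₂. Concretely, if h ∈ H₁ \ H₂, then [h,t₁] = 1 in E(G,H₁) but [h,t₂] ≠ 1 in E(G,H₂). -/
open HNNExtension

private lemma hnn_commute_of_mem {G : Type*} [Group G] (H : Subgroup G) {h : G}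
    (hh : h ∈ H) :
    Commute (HNNExtension.of (A := H) (B := H) (φ := MulEquiv.refl H) h)
      HNNExtension.t := by
  have := HNNExtension.of_mul_t (G := G) (A := H) (B := H) (φ := MulEquiv.refl H) ⟨h, hh⟩
  simpa [Commute, SemiconjBy] using this

private lemma hnn_not_commute_of_not_mem {G : Type*} [Group G] (H : Subgroup G) {h : G}
    (hh : h ∉ H) :
    ¬ Commute (HNNExtension.of (A := H) (B := H) (φ := MulEquiv.refl H) h)
      HNNExtension.t := by
  intro hc
  let w₁ : HNNExtension.NormalWord.ReducedWord G H H := ⟨h, [(1, 1)], List.isChain_singleton _⟩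
  let w₂ : HNNExtension.NormalWord.ReducedWord G H H := ⟨1, [(1, h)], List.isChain_singleton _⟩
  have hprod : w₁.prod (MulEquiv.refl H) = w₂.prod (MulEquiv.refl H) := by
    simp only [w₁, w₂, HNNExtension.NormalWord.ReducedWord.prod, List.map_cons, List.map_nil, List.prod_cons,
      List.prod_nil, map_one, one_mul, mul_one, zpow_one]
    exact hc.eq
  have h2 := (HNNExtension.ReducedWord.map_fst_eq_and_of_prod_eq (MulEquiv.refl H) hprod).2
  have h3 := h2 1 (by simp [w₁])
  simp only [w₁, w₂, mul_one, toSubgroup] at h3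
  exact hh (by simpa using inv_mem h3)

/-- If `H₁ ≠ H₂` are subgroups of `G`, then `E(G,H₁)` and `E(G,H₂)` are not isomorphic
as marked groups: no isomorphism sends each `g ∈ G` to itself and `t₁` to `t₂`.
Concretely, if `h ∈ H₁ \ H₂` then `h` commutes with the stable letter in `E(G,H₁)` but
not in `E(G,H₂)`. -/
theorem hnn_not_marked_iso_of_ne (G : Type*) [Group G] (H₁ H₂ : Subgroup G)
    (hne : H₁ ≠ H₂) :
    (¬ ∃ φ : HNNExtension G H₁ H₁ (MulEquiv.refl H₁) ≃*
        HNNExtension G H₂ H₂ (MulEquiv.refl H₂),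
        (∀ g : G, φ (HNNExtension.of g) = HNNExtension.of g) ∧
          φ HNNExtension.t = HNNExtension.t) ∧
    ∀ h : G, h ∈ H₁ → h ∉ H₂ →
      Commute (HNNExtension.of (A := H₁) (B := H₁) (φ := MulEquiv.refl H₁) h)
          HNNExtension.t ∧
        ¬ Commute (HNNExtension.of (A := H₂) (B := H₂) (φ := MulEquiv.refl H₂) h)
          HNNExtension.t := by
  refine ⟨?_, fun h h1 h2 => ⟨hnn_commute_of_mem H₁ h1, hnn_not_commute_of_not_mem H₂ h2⟩⟩
  rintro ⟨φ, hφg, hφt⟩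
  obtain ⟨h, hmem⟩ : ∃ h : G, (h ∈ H₁ ∧ h ∉ H₂) ∨ (h ∈ H₂ ∧ h ∉ H₁) := by
    by_contra hcon
    push_neg at hcon
    exact hne (SetLike.ext fun x => by
      have := hcon x
      tauto)
  rcases hmem with ⟨h1, h2⟩ | ⟨h1, h2⟩
  · have hc := hnn_commute_of_mem H₁ h1
    have : Commute (HNNExtension.of (A := H₂) (B := H₂) (φ := MulEquiv.refl H₂) h)
        HNNExtension.t := by
      have := congrArg φ hc.eq
      simpa [map_mul, hφg, hφt, Commute, SemiconjBy] using this
    exact hnn_not_commute_of_not_mem H₂ h2 this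
  · have hc := hnn_commute_of_mem H₂ h1
    have : Commute (HNNExtension.of (A := H₁) (B := H₁) (φ := MulEquiv.refl H₁) h)
        HNNExtension.t := by
      have := congrArg φ.symm hc.eq
      have hg' : φ.symm (HNNExtension.of h) = HNNExtension.of h := by
        rw [← hφg h, MulEquiv.symm_apply_apply]
      have ht' : φ.symm HNNExtension.t = HNNExtension.t := by
        rw [← hφt, MulEquiv.symm_apply_apply]
      simpa [map_mul, hg', ht', Commute, SemiconjBy] using this
    exact hnn_not_commute_of_not_mem H₁ h2 this
end

section
/- Let G be a group and H ≤ G. For an element g ∈ G, the image of g in the HNN-extension E(G,H) = ⟨G, t | t⁻¹ht = h, h ∈ H⟩ commutes with the stable letter t if and only if g ∈ H. -/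
/-- In `E(G,H) = ⟨G, t ∣ t⁻¹ht = h, h ∈ H⟩`, the image of `g ∈ G` commutes with the
stable letter `t` if and only if `g ∈ H`. -/
theorem hnn_commute_t_iff (G : Type*) [Group G] (H : Subgroup G) (g : G) :
    Commute (HNNExtension.of (A := H) (B := H) (φ := MulEquiv.refl H) g)
      HNNExtension.t ↔ g ∈ H := by
  constructor
  · intro hc
    by_contra hg
    set φ : H ≃* H := MulEquiv.refl H
    -- reduced word t⁻¹ * g * t
    let w : HNNExtension.NormalWord.ReducedWord G H H :=
      { head := 1
        toList := [(-1, g), (1, 1)]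
        chain := by
          refine List.isChain_cons_cons.2 ⟨?_, List.isChain_singleton _⟩
          intro h
          exact absurd h hg }
    have hprod : w.prod φ = HNNExtension.of g := by
      simp only [w, HNNExtension.NormalWord.ReducedWord.prod, List.map_cons, List.map_nil,
        List.prod_cons, List.prod_nil, map_one, one_mul, mul_one, Units.val_neg, Units.val_one, zpow_neg, zpow_one]
      rw [mul_assoc, inv_mul_eq_iff_eq_mul]
      exact hc
    have := HNNExtension.ReducedWord.toList_eq_nil_of_mem_of_range φ w
      ⟨g, hprod.symm⟩
    simp [w] at this
  · intro hg
    have := HNNExtension.of_mul_t (A := H) (B := H) (φ := MulEquiv.refl H) ⟨g, hg⟩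
    simpa [Commute, SemiconjBy] using this
end

section
/- Let B = ⟨a,b,c | a² = 1, [a,a^b] = 1, [b,c] = 1, a^c = a·a^b⟩. Then the subgroup of B generated by a and b is isomorphic to the wreath product (ℤ/2ℤ) ≀ ℤ, via the map sending a to a generator of ℤ/2ℤ and b to a generator of ℤ. -/
open Multiplicative

/-- Relators of `B = ⟨a,b,c ∣ a² = 1, [a,a^b] = 1, [b,c] = 1, a^c = a·a^b⟩`, where
`x^y = y⁻¹xy` and `[x,y] = x⁻¹y⁻¹xy`; generators `0 ↦ a`, `1 ↦ b`, `2 ↦ c`. -/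
def Brels : Set (FreeGroup (Fin 3)) :=
  let a := FreeGroup.of (0 : Fin 3)
  let b := FreeGroup.of (1 : Fin 3)
  let c := FreeGroup.of (2 : Fin 3)
  { a ^ 2,
    a⁻¹ * (b⁻¹ * a * b)⁻¹ * a * (b⁻¹ * a * b),
    b⁻¹ * c⁻¹ * b * c,
    (c⁻¹ * a * c)⁻¹ * (a * (b⁻¹ * a * b)) }

/-- Baumslag's metabelian group `B`. -/
def BGroup := PresentedGroup Brels

instance : Group BGroup := by unfold BGroup; infer_instance

/-- The shift action of `ℤ` on `⊕_{i∈ℤ} ℤ/2ℤ`. -/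
noncomputable def shiftAction : Multiplicative ℤ →* MulAut (Multiplicative (ℤ →₀ ZMod 2)) :=
  zpowersHom _ (AddEquiv.toMultiplicative (Finsupp.domCongr (Equiv.addRight (1 : ℤ))))

/-- The wreath product `(ℤ/2ℤ) ≀ ℤ = (⊕_{i∈ℤ} ℤ/2ℤ) ⋊ ℤ`, with `ℤ` acting by shift. -/
def Wreath := SemidirectProduct (Multiplicative (ℤ →₀ ZMod 2)) (Multiplicative ℤ)
  shiftAction

noncomputable instance : Group Wreath := by unfold Wreath; infer_instance

/-!
The conjugates `aₙ = bⁿ a b⁻ⁿ` commute pairwise: `a` commutes with `a₋₁` by a defining relation,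
and conjugation by `c⁻¹`, which commutes with `b` and sends `aₙ` to `aₙ aₙ₋₁`, propagates
"`a` commutes with `aₘ` and `aₘ₊₁`" to "`a` commutes with `aₘ₊₂`". Together with `a² = 1` this
gives a homomorphism from `(ℤ/2ℤ) ≀ ℤ` onto `⟨a, b⟩` sending the `i`-th basis vector of
`⊕ ℤ/2ℤ` to `aᵢ` and the generator of `ℤ` to `b`. It is injective because `B` acts on the
Laurent series field `K = 𝔽₂((X))` by `a : x ↦ x + 1`, `b : x ↦ X x`, `c : x ↦ (1 + X⁻¹)⁻¹ x`,
and the composite map to the affine group `K ⋊ Kˣ` sends `(f, n)` to `(∑ fᵢ Xⁱ, Xⁿ)`.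
-/

section Relations

variable {G : Type*} [Group G]

theorem inv_mul_inv_mul_mul_eq_one_iff_commute {x y : G} :
    x⁻¹ * y⁻¹ * x * y = 1 ↔ Commute x y := by
  rw [← Commute.inv_inv_iff, ← commutatorElement_eq_one_iff_commute, commutatorElement_def,
    inv_inv, inv_inv]

structure BRelations (a b c : G) : Prop where
  sq_eq_one : a ^ 2 = 1
  commute_conj : Commute a (b⁻¹ * a * b)
  commute_b_c : Commute b c
  conj_eq : c⁻¹ * a * c = a * (b⁻¹ * a * b)

theorem bRelations_iff_forall_lift_eq_one (f : Fin 3 → G) :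
    BRelations (f 0) (f 1) (f 2) ↔ ∀ r ∈ Brels, FreeGroup.lift f r = 1 := by
  simp only [Brels, Set.mem_insert_iff, Set.mem_singleton_iff, forall_eq_or_imp, forall_eq,
    map_mul, map_inv, map_pow, FreeGroup.lift_apply_of, inv_mul_inv_mul_mul_eq_one_iff_commute,
    inv_mul_eq_one]
  exact ⟨fun ⟨h1, h2, h3, h4⟩ => ⟨h1, h2, h3, h4⟩, fun ⟨h1, h2, h3, h4⟩ => ⟨h1, h2, h3, h4⟩⟩

end Relations

namespace BGroup

-- `PresentedGroup.of i` has type `PresentedGroup Brels`, which `rw` does not unify with `BGroup`.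
def gen (i : Fin 3) : BGroup := PresentedGroup.of i

variable {G : Type*} [Group G] {a b c : G}

def lift (h : BRelations a b c) : BGroup →* G :=
  PresentedGroup.toGroup ((bRelations_iff_forall_lift_eq_one ![a, b, c]).mp h)

theorem lift_gen_zero (h : BRelations a b c) : lift h (gen 0) = a :=
  PresentedGroup.toGroup.of _

theorem lift_gen_one (h : BRelations a b c) : lift h (gen 1) = b :=
  PresentedGroup.toGroup.of _

theorem bRelations_gen : BRelations (gen 0) (gen 1) (gen 2) := by
  have hmk : FreeGroup.lift gen = PresentedGroup.mk Brels := FreeGroup.ext_hom _ _ fun _ => rfl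
  refine (bRelations_iff_forall_lift_eq_one gen).mpr fun r hr => ?_
  rw [hmk]
  exact PresentedGroup.one_of_mem hr

end BGroup

section Conjugates

variable {G : Type*} [Group G]

def zpowConj (a b : G) (n : ℤ) : G := MulAut.conj (b ^ n) a

theorem zpowConj_eq (a b : G) (n : ℤ) : zpowConj a b n = b ^ n * a * (b ^ n)⁻¹ := rfl

theorem map_zpowConj {H : Type*} [Group H] (f : G →* H) (a b : G) (n : ℤ) :
    f (zpowConj a b n) = zpowConj (f a) (f b) n := by
  simp [zpowConj_eq]

theorem closure_range_zpowConj_le (a b : G) :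
    Subgroup.closure (Set.range (zpowConj a b)) ≤ Subgroup.closure {a, b} := by
  have ha : a ∈ Subgroup.closure {a, b} := Subgroup.subset_closure (by simp)
  have hb : b ∈ Subgroup.closure {a, b} := Subgroup.subset_closure (by simp)
  rw [Subgroup.closure_le]
  rintro _ ⟨n, rfl⟩
  exact mul_mem (mul_mem (zpow_mem hb n) ha) (inv_mem (zpow_mem hb n))

variable {a b c : G}

@[simp] theorem zpowConj_zero : zpowConj a b 0 = a := by simp [zpowConj]

theorem zpowConj_neg_one : zpowConj a b (-1) = b⁻¹ * a * b := by simp [zpowConj_eq]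

theorem conj_zpowConj (k n : ℤ) :
    MulAut.conj (b ^ k) (zpowConj a b n) = zpowConj a b (k + n) := by
  rw [zpowConj, zpowConj, ← MulAut.mul_apply, ← map_mul, zpow_add]

theorem zpowConj_sq (ha : a ^ 2 = 1) (n : ℤ) : zpowConj a b n ^ 2 = 1 := by
  rw [zpowConj, ← map_pow, ha, map_one]

theorem Commute.zpowConj_add {i j : ℤ} (h : Commute (zpowConj a b i) (zpowConj a b j)) (k : ℤ) :
    Commute (zpowConj a b (k + i)) (zpowConj a b (k + j)) := by
  simpa only [MulEquiv.coe_toMonoidHom, conj_zpowConj] using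
    h.map (MulAut.conj (b ^ k)).toMonoidHom

theorem commute_zpowConj_iff {i j : ℤ} :
    Commute (zpowConj a b i) (zpowConj a b j) ↔ Commute a (zpowConj a b (j - i)) := by
  constructor
  · intro h
    simpa [neg_add_eq_sub] using h.zpowConj_add (-i)
  · intro h
    have h0 : Commute (zpowConj a b 0) (zpowConj a b (j - i)) := by rwa [zpowConj_zero]
    simpa using h0.zpowConj_add i

theorem BRelations.conj_inv_zpowConj (h : BRelations a b c) (n : ℤ) :
    MulAut.conj c⁻¹ (zpowConj a b n) = zpowConj a b n * zpowConj a b (n - 1) := by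
  have hc : Commute (b ^ n) c⁻¹ := (h.commute_b_c.zpow_left n).inv_right
  rw [zpowConj, ← MulAut.mul_apply, ← map_mul, ← hc.eq, map_mul, MulAut.mul_apply,
    MulAut.conj_apply c⁻¹ a, inv_inv, h.conj_eq, map_mul, ← zpowConj_neg_one, conj_zpowConj,
    ← sub_eq_add_neg]

theorem BRelations.commute_zpowConj_one (h : BRelations a b c) : Commute a (zpowConj a b 1) := by
  have h10 : Commute (zpowConj a b 1) (zpowConj a b 0) :=
    commute_zpowConj_iff.mpr (by rw [zero_sub, zpowConj_neg_one]; exact h.commute_conj)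
  simpa using h10.symm

theorem BRelations.commute_zpowConj_add_two (h : BRelations a b c) {m : ℤ}
    (hm : Commute a (zpowConj a b m)) (hm1 : Commute a (zpowConj a b (m + 1))) :
    Commute a (zpowConj a b (m + 2)) := by
  have hX : Commute (a * zpowConj a b (-1)) (zpowConj a b (m + 1) * zpowConj a b m) := by
    have hm1' : Commute (zpowConj a b 0) (zpowConj a b (m + 1)) := by rwa [zpowConj_zero]
    have hX' := hm1'.map (MulAut.conj c⁻¹).toMonoidHom
    simp only [MulEquiv.coe_toMonoidHom, h.conj_inv_zpowConj] at hX'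
    simpa using hX'
  have hY : Commute (zpowConj a b (-1)) (zpowConj a b (m + 1) * zpowConj a b m) := by
    simpa using (hm1.mul_right hm).inv_left.mul_left hX
  have hZ : Commute (zpowConj a b (-1)) (zpowConj a b m) :=
    commute_zpowConj_iff.mpr (by simpa using hm1)
  have := commute_zpowConj_iff.mp (by simpa using hY.mul_right hZ.inv_right)
  rwa [sub_neg_eq_add, add_assoc, one_add_one_eq_two] at this

theorem BRelations.commute_zpowConj (h : BRelations a b c) (i j : ℤ) :
    Commute (zpowConj a b i) (zpowConj a b j) := by
  have hnat : ∀ n : ℕ, Commute a (zpowConj a b n) ∧ Commute a (zpowConj a b (n + 1)) := by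
    intro n
    induction n with
    | zero => exact ⟨by simp, by simpa using h.commute_zpowConj_one⟩
    | succ n ih =>
      refine ⟨by exact_mod_cast ih.2, ?_⟩
      push_cast
      rw [add_assoc, one_add_one_eq_two]
      exact h.commute_zpowConj_add_two ih.1 ih.2
  have hint : ∀ n : ℤ, Commute a (zpowConj a b n) := by
    intro n
    obtain ⟨k, rfl | rfl⟩ := Int.eq_nat_or_neg n
    · exact (hnat k).1
    · have hk : Commute (zpowConj a b k) (zpowConj a b 0) := by simpa using (hnat k).1.symm
      simpa using commute_zpowConj_iff.mp hk
  exact commute_zpowConj_iff.mpr (hint (j - i))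

end Conjugates

theorem shiftAction_ofAdd_single (k i : ℤ) (m : ZMod 2) :
    shiftAction (ofAdd k) (ofAdd (Finsupp.single i m)) = ofAdd (Finsupp.single (i + k) m) := by
  have hone : ∀ j, shiftAction (ofAdd 1) (ofAdd (Finsupp.single j m)) =
      ofAdd (Finsupp.single (j + 1) m) := by
    intro j
    simp [shiftAction]
  have hneg : ∀ j, shiftAction (ofAdd (-1)) (ofAdd (Finsupp.single j m)) =
      ofAdd (Finsupp.single (j + -1) m) := by
    intro j
    rw [ofAdd_neg, map_inv, MulAut.inv_apply, MulEquiv.symm_apply_eq, hone, neg_add_cancel_right]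
  induction k using Int.induction_on generalizing i with
  | zero => simp
  | succ k ih => rw [ofAdd_add, map_mul, MulAut.mul_apply, hone, ih, add_assoc, add_comm 1]
  | pred k ih =>
    rw [sub_eq_add_neg, ofAdd_add, map_mul, MulAut.mul_apply, hneg, ih, add_assoc,
      add_comm (-1 : ℤ)]

section WreathLift

variable {G : Type*} [Group G] {a b : G} (ha : a ^ 2 = 1)
  (hcomm : ∀ i j, Commute (zpowConj a b i) (zpowConj a b j))

open scoped IsMulCommutative in
noncomputable def baseLift : Multiplicative (ℤ →₀ ZMod 2) →* G :=
  let H := Subgroup.closure (Set.range (zpowConj a b))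
  haveI : IsMulCommutative H :=
    Subgroup.isMulCommutative_closure (by rintro _ ⟨i, rfl⟩ _ ⟨j, rfl⟩; exact (hcomm i j).eq)
  let x (i : ℤ) : H := ⟨zpowConj a b i, Subgroup.subset_closure ⟨i, rfl⟩⟩
  have hx (i : ℤ) : x i ^ 2 = 1 := Subtype.ext (zpowConj_sq ha i)
  let ofZMod (i : ℤ) : ZMod 2 →+ Additive H :=
    ZMod.lift 2 ⟨zmultiplesHom _ (Additive.ofMul (x i)), by
      rw [zmultiplesHom_apply, Nat.cast_ofNat, ← ofMul_zpow, zpow_ofNat, hx, ofMul_one]⟩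
  H.subtype.comp (AddMonoidHom.toMultiplicativeLeft (Finsupp.liftAddHom ofZMod))

theorem baseLift_single (i : ℤ) (m : ZMod 2) :
    baseLift ha hcomm (ofAdd (Finsupp.single i m)) = zpowConj a b i ^ m.val := by
  have hm : m = ((m.val : ℤ) : ZMod 2) := by simp
  simp only [baseLift, MonoidHom.coe_comp, Function.comp_apply,
    AddMonoidHom.toMultiplicativeLeft_apply_apply, toAdd_ofAdd, Finsupp.liftAddHom_apply_single]
  conv_lhs => rw [hm, ZMod.lift_coe]
  simp only [zmultiplesHom_apply, ← ofMul_zpow, toMul_ofMul, zpow_natCast, Subgroup.coe_subtype,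
    SubgroupClass.coe_pow]

theorem baseLift_mem (x : Multiplicative (ℤ →₀ ZMod 2)) :
    baseLift ha hcomm x ∈ Subgroup.closure (Set.range (zpowConj a b)) :=
  Subtype.prop _

theorem baseLift_comp_shiftAction (z : Multiplicative ℤ) :
    (baseLift ha hcomm).comp (shiftAction z).toMonoidHom =
      (MulAut.conj (zpowersHom G b z)).toMonoidHom.comp (baseLift ha hcomm) := by
  refine Finsupp.mulHom_ext fun i m => ?_
  simp only [MonoidHom.coe_comp, MulEquiv.coe_toMonoidHom, Function.comp_apply]
  rw [← ofAdd_toAdd z, shiftAction_ofAdd_single, zpowersHom_apply, toAdd_ofAdd, baseLift_single,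
    baseLift_single, map_pow, conj_zpowConj, add_comm]

noncomputable def wreathLift :
    Multiplicative (ℤ →₀ ZMod 2) ⋊[shiftAction] Multiplicative ℤ →* G :=
  SemidirectProduct.lift (baseLift ha hcomm) (zpowersHom G b) (baseLift_comp_shiftAction ha hcomm)

theorem wreathLift_inl (x : Multiplicative (ℤ →₀ ZMod 2)) :
    wreathLift ha hcomm (SemidirectProduct.inl x) = baseLift ha hcomm x :=
  SemidirectProduct.lift_inl _ _ _ x

theorem wreathLift_inl_single (i : ℤ) :
    wreathLift ha hcomm (SemidirectProduct.inl (ofAdd (Finsupp.single i 1))) = zpowConj a b i := by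
  rw [wreathLift_inl, baseLift_single, ZMod.val_one, pow_one]

theorem wreathLift_inr (z : Multiplicative ℤ) :
    wreathLift ha hcomm (SemidirectProduct.inr z) = b ^ z.toAdd :=
  SemidirectProduct.lift_inr _ _ _ z

theorem range_wreathLift : (wreathLift ha hcomm).range = Subgroup.closure {a, b} := by
  have hb : b ∈ Subgroup.closure {a, b} := Subgroup.subset_closure (by simp)
  apply le_antisymm
  · rintro _ ⟨w, rfl⟩
    rw [← SemidirectProduct.inl_left_mul_inr_right w, map_mul, wreathLift_inl, wreathLift_inr]
    exact mul_mem (closure_range_zpowConj_le a b (baseLift_mem ha hcomm _)) (zpow_mem hb _)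
  · rw [Subgroup.closure_le]
    rintro _ (rfl | rfl)
    · exact ⟨_, (wreathLift_inl_single ha hcomm 0).trans zpowConj_zero⟩
    · exact ⟨SemidirectProduct.inr (ofAdd 1), by rw [wreathLift_inr, toAdd_ofAdd, zpow_one]⟩

end WreathLift

section AffineGroup

variable (R : Type*) [CommRing R]

def unitsMulAut : Rˣ →* MulAut (Multiplicative R) where
  toFun u := AddEquiv.toMultiplicative (DistribMulAction.toAddAut Rˣ R u)
  map_one' := by ext; simp
  map_mul' u v := by ext; simp [mul_smul]

variable {R}

@[simp] theorem unitsMulAut_apply (u : Rˣ) (x : R) :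
    unitsMulAut R u (ofAdd x) = ofAdd (u * x) := rfl

open SemidirectProduct in
theorem zpowConj_inl_inr (x : R) (u : Rˣ) (n : ℤ) :
    zpowConj (inl (ofAdd x) : Multiplicative R ⋊[unitsMulAut R] Rˣ) (inr u) n =
      inl (ofAdd (↑(u ^ n) * x)) := by
  rw [zpowConj_eq, ← map_zpow, ← map_inv, ← inl_aut, unitsMulAut_apply]

open SemidirectProduct in
theorem bRelations_inl_inr (h2 : (2 : R) = 0) (β γ : Rˣ)
    (hγ : ((γ⁻¹ : Rˣ) : R) = 1 + ((β⁻¹ : Rˣ) : R)) :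
    BRelations (inl (ofAdd 1) : Multiplicative R ⋊[unitsMulAut R] Rˣ) (inr β) (inr γ) := by
  have hconj (u : Rˣ) : (inr u)⁻¹ * inl (ofAdd 1) * inr u =
      (inl (ofAdd ((u⁻¹ : Rˣ) : R)) : Multiplicative R ⋊[unitsMulAut R] Rˣ) := by
    simpa [zpowConj_neg_one] using zpowConj_inl_inr (1 : R) u (-1)
  refine ⟨?_, ?_, (Commute.all β γ).map inr, ?_⟩
  · rw [← map_pow, ← ofAdd_nsmul, two_nsmul, ← two_mul, h2, mul_one, ofAdd_zero, map_one]
  · rw [hconj]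
    exact (Commute.all _ _).map inl
  · rw [hconj, hconj, ← map_mul, ← ofAdd_add, hγ]

end AffineGroup

namespace HahnSeries

variable {Γ R : Type*} [PartialOrder Γ] [Zero R]

theorem ofFinsupp_single (a : Γ) (r : R) : ofFinsupp (Finsupp.single a r) = single a r := by
  classical
  ext b
  rw [coeff_ofFinsupp, coeff_single, Finsupp.single_apply]
  exact if_congr eq_comm rfl rfl

theorem ofFinsupp_injective : Function.Injective (ofFinsupp : (Γ →₀ R) → R⟦Γ⟧) :=
  fun f g h => Finsupp.ext fun a => by simpa using congrArg (coeff · a) h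

end HahnSeries

namespace LaurentSeries

open HahnSeries

variable {F : Type*} [Field F]

noncomputable def unitX : (LaurentSeries F)ˣ := Units.mk0 (single 1 1) (by simp)

theorem val_unitX_zpow (n : ℤ) :
    ((unitX ^ n : (LaurentSeries F)ˣ) : LaurentSeries F) = single n 1 := by
  rw [Units.val_zpow_eq_zpow_val, unitX, Units.val_mk0, ← RatFunc.single_zpow]

theorem unitX_zpow_injective :
    Function.Injective (unitX ^ · : ℤ → (LaurentSeries F)ˣ) := by
  intro m n h
  have := congrArg (fun u : (LaurentSeries F)ˣ => (u : LaurentSeries F).order) h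
  simp only [val_unitX_zpow] at this
  rwa [order_single one_ne_zero, order_single one_ne_zero] at this

theorem one_add_inv_unitX_ne_zero :
    (1 : LaurentSeries F) + ↑(unitX⁻¹ : (LaurentSeries F)ˣ) ≠ 0 := by
  intro h
  rw [← zpow_neg_one, val_unitX_zpow] at h
  simpa [coeff_single] using congrArg (coeff · 0) h

theorem two_eq_zero [CharP F 2] : (2 : LaurentSeries F) = 0 := by
  rw [← map_ofNat (algebraMap F (LaurentSeries F)) 2, CharTwo.two_eq_zero, map_zero]

end LaurentSeries

namespace BGroup

open HahnSeries SemidirectProduct LaurentSeries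

noncomputable def laurentRep :
    BGroup →* Multiplicative (LaurentSeries (ZMod 2)) ⋊[unitsMulAut _] (LaurentSeries (ZMod 2))ˣ :=
  lift (bRelations_inl_inr two_eq_zero unitX
    (Units.mk0 _ one_add_inv_unitX_ne_zero)⁻¹ (by simp))

noncomputable def ofWreath :
    Multiplicative (ℤ →₀ ZMod 2) ⋊[shiftAction] Multiplicative ℤ →* BGroup :=
  wreathLift bRelations_gen.sq_eq_one bRelations_gen.commute_zpowConj

theorem ofWreath_inl_single (i : ℤ) :
    ofWreath (inl (ofAdd (Finsupp.single i 1))) = zpowConj (gen 0) (gen 1) i :=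
  wreathLift_inl_single _ _ i

theorem ofWreath_inr (z : Multiplicative ℤ) : ofWreath (inr z) = gen 1 ^ z.toAdd :=
  wreathLift_inr _ _ z

theorem range_ofWreath : ofWreath.range = Subgroup.closure {gen 0, gen 1} :=
  range_wreathLift _ _

theorem laurentRep_ofWreath_inl (x : Multiplicative (ℤ →₀ ZMod 2)) :
    laurentRep (ofWreath (inl x)) = inl (ofAdd (ofFinsupp x.toAdd)) := by
  have hsingle (i : ℤ) : laurentRep (ofWreath (inl (ofAdd (Finsupp.single i 1)))) =
      inl (ofAdd (single i 1)) := by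
    rw [ofWreath_inl_single, map_zpowConj, laurentRep, lift_gen_zero, lift_gen_one,
      zpowConj_inl_inr, val_unitX_zpow, mul_one]
  have hcomp : (laurentRep.comp ofWreath).comp inl =
      inl.comp (AddMonoidHom.toMultiplicative (ofFinsuppLinearMap (ZMod 2)).toAddMonoidHom) := by
    refine Finsupp.mulHom_ext fun i m => ?_
    obtain rfl | rfl : m = 0 ∨ m = 1 := by decide +revert
    · simp
    · simp only [MonoidHom.coe_comp, Function.comp_apply, hsingle]
      rw [AddMonoidHom.toMultiplicative_apply_apply, toAdd_ofAdd, LinearMap.toAddMonoidHom_coe]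
      exact congrArg (inl ∘ ofAdd) (ofFinsupp_single i 1).symm
  exact DFunLike.congr_fun hcomp x

theorem laurentRep_ofWreath_inr (z : Multiplicative ℤ) :
    laurentRep (ofWreath (inr z)) = inr (unitX ^ z.toAdd) := by
  rw [ofWreath_inr, map_zpow, laurentRep, lift_gen_one, ← map_zpow]

theorem ofWreath_injective : Function.Injective ofWreath := by
  refine (injective_iff_map_eq_one _).mpr fun w hw => ?_
  have h := congrArg laurentRep hw
  rw [← inl_left_mul_inr_right w, map_mul, map_mul, laurentRep_ofWreath_inl,
    laurentRep_ofWreath_inr, map_one, ← SemidirectProduct.mk_eq_inl_mul_inr] at h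
  have hleft : ofFinsupp w.left.toAdd = 0 := congrArg (toAdd ∘ SemidirectProduct.left) h
  have hright : unitX ^ w.right.toAdd = unitX ^ (0 : ℤ) :=
    (congrArg SemidirectProduct.right h).trans (zpow_zero _).symm
  refine SemidirectProduct.ext ?_ ?_
  · exact toAdd.injective (ofFinsupp_injective (hleft.trans (map_zero ofFinsupp).symm))
  · exact toAdd.injective (unitX_zpow_injective hright)

end BGroup

/-- The subgroup `⟨a,b⟩` of `B` is isomorphic to `(ℤ/2ℤ) ≀ ℤ` via `a ↦` the generator of
the `0`-th copy of `ℤ/2ℤ` and `b ↦` the generator of `ℤ`. -/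
theorem baumslag_subgroup_iso_wreath :
    ∃ e : (Subgroup.closure {(PresentedGroup.of 0 : BGroup), PresentedGroup.of 1}) ≃*
        Wreath,
      e ⟨PresentedGroup.of 0, Subgroup.subset_closure (by simp)⟩ =
          SemidirectProduct.inl (ofAdd (Finsupp.single (0 : ℤ) (1 : ZMod 2))) ∧
      e ⟨PresentedGroup.of 1, Subgroup.subset_closure (by simp)⟩ =
          SemidirectProduct.inr (ofAdd (1 : ℤ)) := by
  let E := (MonoidHom.ofInjective BGroup.ofWreath_injective).trans
    (MulEquiv.subgroupCongr BGroup.range_ofWreath)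
  refine ⟨E.symm, E.symm_apply_eq.mpr (Subtype.ext ?_), E.symm_apply_eq.mpr (Subtype.ext ?_)⟩
  · exact ((BGroup.ofWreath_inl_single 0).trans zpowConj_zero).symm
  · exact ((BGroup.ofWreath_inr _).trans (zpow_one _)).symm
end

section
/- Let A = ℤ × (⊕_{i∈ℤ} ℤ/2ℤ), written multiplicatively, with h = (1,0) and a_i the generator of the i-th summand ℤ/2ℤ. Then for every finite subset F ⊆ A there exists i ∈ ℤ such that the cyclic subgroups ⟨h²⟩ and ⟨h·a_i⟩ satisfy ⟨h·a_i⟩ ∩ F = ⟨h²⟩ ∩ F, while ⟨h·a_i⟩ ≠ ⟨h²⟩. -/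
open Multiplicative Subgroup

/-- In `A = ℤ × (⊕_{i∈ℤ} ℤ/2ℤ)` (written multiplicatively), with `h = (1,0)` and `a_i`
the generator of the `i`-th summand `ℤ/2ℤ`: for every finite subset `F ⊆ A` there is
`i ∈ ℤ` such that `⟨h·a_i⟩ ∩ F = ⟨h²⟩ ∩ F` while `⟨h·a_i⟩ ≠ ⟨h²⟩`. -/
theorem cyclic_limit_in_chabauty
    (h : Multiplicative (ℤ × (ℤ →₀ ZMod 2))) (a : ℤ → Multiplicative (ℤ × (ℤ →₀ ZMod 2)))
    (hh : h = ofAdd ((1 : ℤ), (0 : ℤ →₀ ZMod 2)))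
    (ha : ∀ i : ℤ, a i = ofAdd ((0 : ℤ), Finsupp.single i (1 : ZMod 2)))
    (F : Finset (Multiplicative (ℤ × (ℤ →₀ ZMod 2)))) :
    ∃ i : ℤ, (∀ x ∈ F, (x ∈ zpowers (h * a i) ↔ x ∈ zpowers (h ^ 2))) ∧
      zpowers (h * a i) ≠ zpowers (h ^ 2) := by
  classical
  have two0 : (2 : ZMod 2) = 0 := by decide
  obtain ⟨i, hi⟩ := Infinite.exists_notMem_finset (F.sup fun x => (toAdd x).2.support)
  have hsingle : ∀ k : ℤ, k • Finsupp.single i (1 : ZMod 2) =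
      Finsupp.single i ((k : ZMod 2)) := by
    intro k
    rw [Finsupp.smul_single, zsmul_one]
  have key : ∀ k : ℤ, (h * a i) ^ k =
      ofAdd ((k : ℤ), Finsupp.single i (k : ZMod 2)) := by
    intro k
    subst hh
    rw [ha i, ← ofAdd_add, ← ofAdd_zsmul]
    refine congrArg ofAdd (Prod.ext ?_ ?_)
    · show k • ((1 : ℤ) + 0) = k
      simp
    · show k • ((0 : ℤ →₀ ZMod 2) + Finsupp.single i 1) = _
      rw [zero_add, hsingle k]
  have key2 : ∀ k : ℤ, (h ^ 2) ^ k = ofAdd ((2 * k : ℤ), (0 : ℤ →₀ ZMod 2)) := by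
    intro k
    subst hh
    rw [← ofAdd_nsmul, ← ofAdd_zsmul]
    refine congrArg ofAdd (Prod.ext ?_ ?_)
    · show k • ((2 : ℕ) • (1 : ℤ)) = 2 * k
      simp [mul_comm]
    · show k • ((2 : ℕ) • (0 : ℤ →₀ ZMod 2)) = 0
      simp
  refine ⟨i, ?_, ?_⟩
  · intro x hxF
    rw [mem_zpowers_iff, mem_zpowers_iff]
    constructor
    · rintro ⟨k, hk⟩
      rw [key k] at hk
      rcases Int.even_or_odd k with ⟨m, rfl⟩ | ⟨m, rfl⟩
      · refine ⟨m, ?_⟩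
        rw [key2 m, ← hk]
        refine congrArg ofAdd (Prod.ext ?_ ?_)
        · show (2 * m : ℤ) = m + m
          ring
        · show (0 : ℤ →₀ ZMod 2) = Finsupp.single i ((m + m : ℤ) : ZMod 2)
          rw [show ((m + m : ℤ) : ZMod 2) = 0 by
            rw [Int.cast_add, ← two_mul, two0, zero_mul], Finsupp.single_zero]
      · exfalso
        apply hi
        rw [Finset.mem_sup]
        refine ⟨x, hxF, ?_⟩
        rw [← hk]
        show i ∈ (Finsupp.single i ((2 * m + 1 : ℤ) : ZMod 2)).support
        rw [show ((2 * m + 1 : ℤ) : ZMod 2) = 1 by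
          rw [Int.cast_add, Int.cast_mul, Int.cast_one, Int.cast_two, two0, zero_mul, zero_add]]
        rw [Finsupp.support_single_ne_zero _ one_ne_zero]
        exact Finset.mem_singleton_self i
    · rintro ⟨m, hm⟩
      refine ⟨2 * m, ?_⟩
      rw [key (2 * m), ← hm, key2 m]
      refine congrArg ofAdd (Prod.ext rfl ?_)
      show Finsupp.single i ((2 * m : ℤ) : ZMod 2) = 0
      rw [show ((2 * m : ℤ) : ZMod 2) = 0 by
        rw [Int.cast_mul, Int.cast_two, two0, zero_mul], Finsupp.single_zero]
  · intro heq
    have hmem : h * a i ∈ zpowers (h ^ 2) := heq ▸ mem_zpowers _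
    rw [mem_zpowers_iff] at hmem
    obtain ⟨m, hm⟩ := hmem
    rw [key2 m, hh, ha i, ← ofAdd_add] at hm
    have h2 := congrArg (fun z => (toAdd z).1) hm
    simp only [toAdd_ofAdd, Prod.fst_add] at h2
    omega
end

section
/- In the group G = ⟨B, h, s | [h,a]=[h,b]=[h,c]=1, (h²)^s = ha⟩ with B = ⟨a,b,c | a²=1, [a,a^b]=1, [b,c]=1, a^c = a·a^b⟩, for every i ∈ ℤ and g = (sb^i)⁻¹, one has g⟨h²⟩g⁻¹ = ⟨h·a^{b^i}⟩, and moreover (h·a^{b^i})² = h², so that g⟨h²⟩g⁻¹ = ⟨h²⟩ ∪ ⟨h²⟩·h·a^{b^i}. -/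
/-!
Conjugation by `(s bⁱ)⁻¹` sends `h²` first to `s⁻¹ h² s = h a` and then to `(h a)^{bⁱ} = h a^{bⁱ}`,
because `h` commutes with `b`. As `h` also commutes with the involution `a^{bⁱ}`, the square of
`h a^{bⁱ}` is `h²`, so its cyclic group splits into the even powers `⟨h²⟩` and the odd ones.
-/

open Subgroup

/-- Relators of `G = ⟨a,b,c,h,s ∣ a²=1, [a,a^b]=1, [b,c]=1, a^c=a·a^b,
[h,a]=[h,b]=[h,c]=1, (h²)^s = ha⟩`; generators `0 ↦ a`, `1 ↦ b`, `2 ↦ c`, `3 ↦ h`,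
`4 ↦ s`. -/
def Grels : Set (FreeGroup (Fin 5)) :=
  let a := FreeGroup.of (0 : Fin 5)
  let b := FreeGroup.of (1 : Fin 5)
  let c := FreeGroup.of (2 : Fin 5)
  let h := FreeGroup.of (3 : Fin 5)
  let s := FreeGroup.of (4 : Fin 5)
  { a ^ 2,
    a⁻¹ * (b⁻¹ * a * b)⁻¹ * a * (b⁻¹ * a * b),
    b⁻¹ * c⁻¹ * b * c,
    (c⁻¹ * a * c)⁻¹ * (a * (b⁻¹ * a * b)),
    h⁻¹ * a⁻¹ * h * a,
    h⁻¹ * b⁻¹ * h * b,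
    h⁻¹ * c⁻¹ * h * c,
    (s⁻¹ * h ^ 2 * s) * (h * a)⁻¹ }

/-- The group `G = ⟨B, h, s ∣ [h,a]=[h,b]=[h,c]=1, (h²)^s = ha⟩`. -/
def OGroup := PresentedGroup Grels

instance : Group OGroup := by unfold OGroup; infer_instance

section

variable {G : Type*} [Group G]

theorem zpowers_eq_zpowers_sq_union_image_mul (t : G) :
    (zpowers t : Set G) = (zpowers (t ^ 2) : Set G) ∪ (· * t) '' (zpowers (t ^ 2) : Set G) := by
  have sq_zpow (m : ℤ) : (t ^ 2) ^ m = t ^ (2 * m) := by rw [zpow_mul, zpow_ofNat]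
  ext x
  simp only [SetLike.mem_coe, mem_zpowers_iff, Set.mem_union, Set.mem_image]
  constructor
  · rintro ⟨n, rfl⟩
    rcases Int.even_or_odd' n with ⟨m, rfl | rfl⟩
    · exact Or.inl ⟨m, sq_zpow m⟩
    · exact Or.inr ⟨_, ⟨m, rfl⟩, by rw [sq_zpow, zpow_add_one]⟩
  · rintro (⟨m, rfl⟩ | ⟨_, ⟨m, rfl⟩, rfl⟩)
    · exact ⟨2 * m, (sq_zpow m).symm⟩
    · exact ⟨2 * m + 1, by rw [sq_zpow, zpow_add_one]⟩

theorem mul_conj_sq_of_sq_eq_one {h a x : G} (hha : Commute h a) (hhx : Commute h x)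
    (ha : a ^ 2 = 1) : (h * (x⁻¹ * a * x)) ^ 2 = h ^ 2 := by
  have hconj : Commute h (x⁻¹ * a * x) := (hhx.inv_right.mul_right hha).mul_right hhx
  have hconj_sq : (x⁻¹ * a * x) ^ 2 = 1 := by
    simpa [ha] using conj_pow (a := x⁻¹) (b := a) (i := 2)
  rw [hconj.mul_pow, hconj_sq, mul_one]

theorem map_conj_zpowers_sq {h a b s : G} (hs : s⁻¹ * h ^ 2 * s = h * a) (hhb : Commute h b)
    (i : ℤ) :
    (zpowers (h ^ 2)).map (MulAut.conj (s * b ^ i)⁻¹).toMonoidHom =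
      zpowers (h * ((b ^ i)⁻¹ * a * b ^ i)) := by
  rw [MonoidHom.map_zpowers]
  congr 1
  calc (s * b ^ i)⁻¹ * h ^ 2 * (s * b ^ i)⁻¹⁻¹ = (b ^ i)⁻¹ * (s⁻¹ * h ^ 2 * s) * b ^ i := by group
    _ = (b ^ i)⁻¹ * h * (a * b ^ i) := by rw [hs]; group
    _ = h * ((b ^ i)⁻¹ * a * b ^ i) := by rw [← (hhb.zpow_right i).inv_right.eq]; group

end

namespace OGroup

abbrev a : OGroup := PresentedGroup.of 0
abbrev b : OGroup := PresentedGroup.of 1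
abbrev h : OGroup := PresentedGroup.of 3
abbrev s : OGroup := PresentedGroup.of 4

theorem a_sq : a ^ 2 = 1 :=
  PresentedGroup.one_of_mem (by simp [Grels])

theorem commute_h_a : Commute h a := by
  exact (PresentedGroup.mk_eq_mk_of_inv_mul_mem (rels := Grels)
    (x := .of 0 * .of 3) (y := .of 3 * .of 0) (by simp [Grels, mul_assoc])).symm

theorem commute_h_b : Commute h b := by
  exact (PresentedGroup.mk_eq_mk_of_inv_mul_mem (rels := Grels)
    (x := .of 1 * .of 3) (y := .of 3 * .of 1) (by simp [Grels, mul_assoc])).symm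

theorem conj_s_h_sq : s⁻¹ * h ^ 2 * s = h * a :=
  PresentedGroup.mk_eq_mk_of_mul_inv_mem (rels := Grels) (by simp [Grels])

end OGroup

/-- In `G`, for every `i ∈ ℤ` and `g = (s·bⁱ)⁻¹`, one has `g⟨h²⟩g⁻¹ = ⟨h·a^{bⁱ}⟩`,
`(h·a^{bⁱ})² = h²`, and hence `g⟨h²⟩g⁻¹ = ⟨h²⟩ ∪ ⟨h²⟩·h·a^{bⁱ}`. -/
theorem conj_zpowers_h_sq (i : ℤ) :
    letI a : OGroup := PresentedGroup.of 0
    letI b : OGroup := PresentedGroup.of 1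
    letI h : OGroup := PresentedGroup.of 3
    letI s : OGroup := PresentedGroup.of 4
    letI g : OGroup := (s * b ^ i)⁻¹
    Subgroup.map (MulAut.conj g).toMonoidHom (zpowers (h ^ 2)) =
        zpowers (h * ((b ^ i)⁻¹ * a * b ^ i)) ∧
      (h * ((b ^ i)⁻¹ * a * b ^ i)) ^ 2 = h ^ 2 ∧
      (zpowers (h * ((b ^ i)⁻¹ * a * b ^ i)) : Set OGroup) =
        (zpowers (h ^ 2) : Set OGroup) ∪
          (fun x => x * (h * ((b ^ i)⁻¹ * a * b ^ i))) '' (zpowers (h ^ 2) : Set OGroup) := by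
  have hsq : (OGroup.h * ((OGroup.b ^ i)⁻¹ * OGroup.a * OGroup.b ^ i)) ^ 2 = OGroup.h ^ 2 :=
    mul_conj_sq_of_sq_eq_one OGroup.commute_h_a (OGroup.commute_h_b.zpow_right i) OGroup.a_sq
  refine ⟨map_conj_zpowers_sq OGroup.conj_s_h_sq OGroup.commute_h_b i, hsq, ?_⟩
  rw [zpowers_eq_zpowers_sq_union_image_mul, hsq]
end

section
/- Let H be a finitely generated group. If there exists a group G containing H such that the conjugation orbit Orb_G(H) ⊆ Sub(G) has H as a non-isolated point (equivalently, H is a limit point of Orb_G(H)), then H is non-co-Hopfian: there exists an injective, non-surjective homomorphism H → H. -/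
/-- If `H` is a finitely generated subgroup of a group `G` which is a non-isolated point
of its conjugation orbit in `Sub(G)` (for every finite `F ⊆ G` there is `g ∈ G` with
`gHg⁻¹ ≠ H` and `gHg⁻¹ ∩ F = H ∩ F`), then `H` is non-co-Hopfian: there is an injective,
non-surjective homomorphism `H → H`. -/
theorem non_coHopfian_of_not_isolated (G : Type*) [Group G] (H : Subgroup G)
    (hFG : H.FG)
    (hlim : ∀ F : Finset G, ∃ g : G,
      Subgroup.map (MulAut.conj g).toMonoidHom H ≠ H ∧
      ∀ x ∈ F, (x ∈ Subgroup.map (MulAut.conj g).toMonoidHom H ↔ x ∈ H)) :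
    ∃ φ : H →* H, Function.Injective φ ∧ ¬ Function.Surjective φ := by
  obtain ⟨S, hS⟩ := hFG
  obtain ⟨g, hne, hF⟩ := hlim S
  -- H ≤ gHg⁻¹
  have hle : H ≤ Subgroup.map (MulAut.conj g).toMonoidHom H := by
    nth_rewrite 1 [← hS]
    apply Subgroup.closure_le _ |>.mpr
    intro x hx
    exact (hF x hx).mpr (hS ▸ Subgroup.subset_closure hx)
  -- hence g⁻¹ h g ∈ H for h ∈ H
  have hmem : ∀ h ∈ H, g⁻¹ * h * g ∈ H := by
    intro h hh
    have := hle hh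
    obtain ⟨y, hy, hyeq⟩ := this
    simp only [MulEquiv.coe_toMonoidHom, MulAut.conj_apply] at hyeq
    have : y = g⁻¹ * h * g := by
      rw [← hyeq]; group
    rwa [← this]
  refine ⟨{ toFun := fun h => ⟨g⁻¹ * h * g, hmem h h.2⟩,
            map_one' := by ext; simp,
            map_mul' := by intro a b; ext; simp [mul_assoc] }, ?_, ?_⟩
  · intro a b hab
    have : g⁻¹ * (a : G) * g = g⁻¹ * (b : G) * g := congrArg Subtype.val hab
    ext
    have := mul_left_cancel (mul_right_cancel this)
    exact this
  · intro hsurj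
    apply hne
    apply le_antisymm _ hle
    intro x hx
    obtain ⟨y, hy, hyeq⟩ := hx
    simp only [MulEquiv.coe_toMonoidHom, MulAut.conj_apply] at hyeq
    obtain ⟨⟨a, ha⟩, haeq⟩ := hsurj ⟨y, hy⟩
    have : g⁻¹ * a * g = y := congrArg Subtype.val haeq
    have hx' : x = a := by rw [← hyeq, ← this]; group
    rwa [hx']
end
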